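/- arXiv:2508.12010 — 2 statements merged into one kernel-verified Lean document; each statement's English description precedes it below -/
import Mathlib

section
/- Let W := {w ∈ ℝ^n : G_w w ≤ g_w} and AB₀ := {θ ∈ ℝ^{n(n+m)} : G_{AB,0} θ ≤ g_{AB,0}} be polytopes, and let x₀,…,x_k ∈ ℝ^n, u₀,…,u_{k−1} ∈ ℝ^m be observed data. Define AB_i := AB_{i−1} ∩ Δ(x_{i−1}, u_{i−1}, x_i) for i = 1,…,k, where Δ(x,u,x⁺) := {θ : −([x;u]ᵀ ⊗ G_w) θ ≤ g_w − G_w x⁺}. Let A_nom ∈ ℝ^{n×n}, B_nom ∈ ℝ^{n×m} with vec([A_nom B_nom]) ∈ AB₀. If vec([A_nom B_nom]) ∉ AB_k (in particular if AB_k = ∅), then there exists an index i ∈ {0,…,k−1} such that x_{i+1} − A_nom x_i − B_nom u_i ∉ W; i.e., the observed data cannot be explained by the nominal model with any admissible disturbance sequence, so a fault must have occurred. -/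
/-! By the vec trick `(Bᵀ ⊗ G) vec X = vec (G X B)`, the parameter `vec([A B])` lies in
`Δ(x, u, x⁺)` exactly when the residual `x⁺ - A x - B u` lies in `W`. So if every observed
residual of the nominal model were admissible, the nominal parameter would survive each
intersection defining `AB_i`, and would still lie in `AB_k`. -/

open Matrix

/-- Column-wise vectorization of the horizontal concatenation `[A B]`. -/
def vecAB {n m : ℕ} (A : Matrix (Fin n) (Fin n) ℝ) (B : Matrix (Fin n) (Fin m) ℝ) :
    ((Fin n ⊕ Fin m) × Fin n) → ℝ :=
  fun p => Sum.elim (A p.2) (B p.2) p.1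

/-- Kronecker product `[x; u]ᵀ ⊗ G_w`. -/
def xuKron {q n m : ℕ} (x : Fin n → ℝ) (u : Fin m → ℝ)
    (Gw : Matrix (Fin q) (Fin n) ℝ) :
    Matrix (Unit × Fin q) ((Fin n ⊕ Fin m) × Fin n) ℝ :=
  Matrix.kroneckerMap (· * ·) (Matrix.of fun (_ : Unit) j => Sum.elim x u j) Gw

/-- The set `Δ(x, u, x⁺)` of parameters consistent with the data triple. -/
def Delta {q n m : ℕ} (Gw : Matrix (Fin q) (Fin n) ℝ) (gw : Fin q → ℝ)
    (x : Fin n → ℝ) (u : Fin m → ℝ) (xplus : Fin n → ℝ) :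
    Set (((Fin n ⊕ Fin m) × Fin n) → ℝ) :=
  {θ | ∀ p : Unit × Fin q,
    (-(xuKron x u Gw)).mulVec θ p ≤ (gw - Gw.mulVec xplus) p.2}

open scoped Kronecker

theorem vecAB_eq_vec_fromCols {n m : ℕ} (A : Matrix (Fin n) (Fin n) ℝ)
    (B : Matrix (Fin n) (Fin m) ℝ) : vecAB A B = vec (fromCols A B) := by
  ext ⟨_ | _, _⟩ <;> rfl

theorem xuKron_eq_kronecker {q n m : ℕ} (x : Fin n → ℝ) (u : Fin m → ℝ)
    (Gw : Matrix (Fin q) (Fin n) ℝ) : xuKron x u Gw = replicateRow Unit (Sum.elim x u) ⊗ₖ Gw :=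
  rfl

theorem xuKron_mulVec_vecAB {q n m : ℕ} (Gw : Matrix (Fin q) (Fin n) ℝ) (x : Fin n → ℝ)
    (u : Fin m → ℝ) (A : Matrix (Fin n) (Fin n) ℝ) (B : Matrix (Fin n) (Fin m) ℝ)
    (p : Unit × Fin q) :
    (xuKron x u Gw *ᵥ vecAB A B) p = (Gw *ᵥ (A *ᵥ x + B *ᵥ u)) p.2 := by
  rw [xuKron_eq_kronecker, vecAB_eq_vec_fromCols, kronecker_mulVec_vec, transpose_replicateRow,
    Matrix.mul_assoc, ← replicateCol_mulVec, ← replicateCol_mulVec, fromCols_mulVec]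
  rfl

theorem vecAB_mem_Delta_iff {q n m : ℕ} (Gw : Matrix (Fin q) (Fin n) ℝ) (gw : Fin q → ℝ)
    (x : Fin n → ℝ) (u : Fin m → ℝ) (xplus : Fin n → ℝ)
    (A : Matrix (Fin n) (Fin n) ℝ) (B : Matrix (Fin n) (Fin m) ℝ) :
    vecAB A B ∈ Delta Gw gw x u xplus ↔ ∀ j, (Gw *ᵥ (xplus - A *ᵥ x - B *ᵥ u)) j ≤ gw j := by
  simp only [Delta, Set.mem_ofPred_eq, Prod.forall, forall_const, neg_mulVec, Pi.neg_apply,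
    xuKron_mulVec_vecAB, sub_sub, mulVec_sub, Pi.sub_apply]
  exact forall_congr' fun j => by rw [neg_le_sub_iff_le_add, sub_le_iff_le_add]

theorem mem_of_mem_inter_succ {α : Type*} {S D : ℕ → Set α} {k : ℕ} {a : α}
    (hS : ∀ i < k, S (i + 1) = S i ∩ D i) (h₀ : a ∈ S 0) (hD : ∀ i < k, a ∈ D i) :
    ∀ i ≤ k, a ∈ S i := by
  intro i hi
  induction i with
  | zero => exact h₀
  | succ i ih =>
    rw [hS i hi]
    exact ⟨ih (Nat.le_of_succ_le hi), hD i hi⟩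

/-- Soundness of the set-membership fault detection rule: if the nominal
parameter vector leaves `AB_k`, then at some observed transition the
residual `x_{i+1} − A_nom x_i − B_nom u_i` lies outside `W`, i.e., the
data cannot be explained by the nominal model with admissible disturbances. -/
theorem smi_fault_detection_sound {q n m s : ℕ}
    (Gw : Matrix (Fin q) (Fin n) ℝ) (gw : Fin q → ℝ)
    (GAB0 : Matrix (Fin s) ((Fin n ⊕ Fin m) × Fin n) ℝ)
    (gAB0 : Fin s → ℝ)
    (k : ℕ) (x : ℕ → Fin n → ℝ) (u : ℕ → Fin m → ℝ)
    (Anom : Matrix (Fin n) (Fin n) ℝ) (Bnom : Matrix (Fin n) (Fin m) ℝ)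
    (hnom : vecAB Anom Bnom ∈
      {θ : ((Fin n ⊕ Fin m) × Fin n) → ℝ | ∀ j, GAB0.mulVec θ j ≤ gAB0 j})
    (AB : ℕ → Set (((Fin n ⊕ Fin m) × Fin n) → ℝ))
    (hAB0 : AB 0 =
      {θ : ((Fin n ⊕ Fin m) × Fin n) → ℝ | ∀ j, GAB0.mulVec θ j ≤ gAB0 j})
    (hABstep : ∀ i < k, AB (i + 1) = AB i ∩ Delta Gw gw (x i) (u i) (x (i + 1)))
    (hdetect : vecAB Anom Bnom ∉ AB k) :
    ∃ i < k, (x (i + 1) - Anom.mulVec (x i) - Bnom.mulVec (u i)) ∉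
      {v : Fin n → ℝ | ∀ j, Gw.mulVec v j ≤ gw j} := by
  by_contra! hadmissible
  refine hdetect (mem_of_mem_inter_succ hABstep (hAB0 ▸ hnom) (fun i hi => ?_) k le_rfl)
  exact (vecAB_mem_Delta_iff ..).2 (hadmissible i hi)
end

section
/- Let C_w ∈ ℝ^{N×N} be symmetric positive definite, Z ∈ ℝ^{N×p} with P := Zᵀ C_w⁻¹ Z invertible, r ∈ ℝ^N, c := P⁻¹ Zᵀ C_w⁻¹ r, and α := rᵀ (C_w⁻¹ − C_w⁻¹ Z P⁻¹ Zᵀ C_w⁻¹) r. If α < 1, then every θ ∈ ℝ^p satisfying (r − Zθ)ᵀ C_w⁻¹ (r − Zθ) ≤ 1 also satisfies (θ − c)ᵀ (P / (1 − α)) (θ − c) ≤ 1; that is, the set of parameters consistent with the data lies inside the ellipsoid with center c and inverse shape matrix C⁻¹ = P/(1 − α). -/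
/-!
Completing the square in the `C_w⁻¹`-inner product. The centre `c` solves the weighted normal
equations `Zᵀ C_w⁻¹ (r − Z c) = 0`, so the residual `r − Z c` is orthogonal to the range of `Z`,
and Pythagoras splits the data misfit of any `θ` as
`(r − Zθ)ᵀ C_w⁻¹ (r − Zθ) = (θ − c)ᵀ P (θ − c) + α`.
A misfit of at most `1` therefore forces `(θ − c)ᵀ P (θ − c) ≤ 1 − α`.
-/

open Matrix

namespace Matrix

variable {R m n : Type*} [CommRing R] [Fintype m] [Fintype n]

lemma IsSymm.dotProduct_mulVec_comm {A : Matrix n n R} (hA : A.IsSymm) (x y : n → R) :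
    x ⬝ᵥ A *ᵥ y = y ⬝ᵥ A *ᵥ x := by
  rw [← dotProduct_transpose_mulVec, hA.eq]

lemma mulVec_dotProduct (A : Matrix m n R) (x : n → R) (y : m → R) :
    A *ᵥ x ⬝ᵥ y = x ⬝ᵥ Aᵀ *ᵥ y := by
  rw [dotProduct_comm, dotProduct_transpose_mulVec]

lemma IsSymm.dotProduct_sub_mulVec_sub_of_orthogonal {A : Matrix n n R} (hA : A.IsSymm)
    {x y : n → R} (hxy : x ⬝ᵥ A *ᵥ y = 0) :
    (x - y) ⬝ᵥ A *ᵥ (x - y) = x ⬝ᵥ A *ᵥ x + y ⬝ᵥ A *ᵥ y := by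
  have hyx : y ⬝ᵥ A *ᵥ x = 0 := by rw [hA.dotProduct_mulVec_comm, hxy]
  rw [mulVec_sub, dotProduct_sub, sub_dotProduct, sub_dotProduct, hxy, hyx]
  ring

variable [DecidableEq n]

noncomputable def weightedLeastSquares (M : Matrix m m R) (Z : Matrix m n R) (r : m → R) :
    n → R :=
  ((Zᵀ * M * Z)⁻¹ * Zᵀ * M) *ᵥ r

lemma transpose_mul_mulVec_sub_mulVec_weightedLeastSquares (M : Matrix m m R)
    (Z : Matrix m n R) [Invertible (Zᵀ * M * Z)] (r : m → R) :
    (Zᵀ * M) *ᵥ (r - Z *ᵥ weightedLeastSquares M Z r) = 0 := by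
  have hP : Zᵀ * M * Z * ((Zᵀ * M * Z)⁻¹ * Zᵀ * M) = Zᵀ * M := by
    rw [← Matrix.mul_assoc, ← Matrix.mul_assoc, mul_inv_of_invertible, Matrix.one_mul]
  rw [weightedLeastSquares, mulVec_sub, mulVec_mulVec, mulVec_mulVec, hP, sub_self]

lemma residual_weightedLeastSquares_dotProduct_mulVec (M : Matrix m m R) (Z : Matrix m n R)
    [Invertible (Zᵀ * M * Z)] (r : m → R) :
    (r - Z *ᵥ weightedLeastSquares M Z r) ⬝ᵥ M *ᵥ (r - Z *ᵥ weightedLeastSquares M Z r) =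
      r ⬝ᵥ (M - M * Z * (Zᵀ * M * Z)⁻¹ * Zᵀ * M) *ᵥ r := by
  have hfit : Z *ᵥ weightedLeastSquares M Z r ⬝ᵥ
      M *ᵥ (r - Z *ᵥ weightedLeastSquares M Z r) = 0 := by
    rw [mulVec_dotProduct, mulVec_mulVec, transpose_mul_mulVec_sub_mulVec_weightedLeastSquares, dotProduct_zero]
  rw [sub_dotProduct r, hfit, sub_zero, sub_mulVec, mulVec_sub]
  simp only [weightedLeastSquares, mulVec_mulVec, Matrix.mul_assoc]

lemma IsSymm.dotProduct_sub_mulVec_sub_eq_add {M : Matrix m m R} (hM : M.IsSymm)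
    (Z : Matrix m n R) [Invertible (Zᵀ * M * Z)] (r : m → R) (θ : n → R) :
    (r - Z *ᵥ θ) ⬝ᵥ M *ᵥ (r - Z *ᵥ θ) =
      (θ - weightedLeastSquares M Z r) ⬝ᵥ (Zᵀ * M * Z) *ᵥ (θ - weightedLeastSquares M Z r) +
        r ⬝ᵥ (M - M * Z * (Zᵀ * M * Z)⁻¹ * Zᵀ * M) *ᵥ r := by
  set c := weightedLeastSquares M Z r
  have hsplit : r - Z *ᵥ θ = (r - Z *ᵥ c) - Z *ᵥ (θ - c) := by
    rw [mulVec_sub]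
    abel
  have horth : (r - Z *ᵥ c) ⬝ᵥ M *ᵥ Z *ᵥ (θ - c) = 0 := by
    rw [hM.dotProduct_mulVec_comm, mulVec_dotProduct, mulVec_mulVec, transpose_mul_mulVec_sub_mulVec_weightedLeastSquares, dotProduct_zero]
  rw [hsplit, hM.dotProduct_sub_mulVec_sub_of_orthogonal horth,
    residual_weightedLeastSquares_dotProduct_mulVec, mulVec_dotProduct, mulVec_mulVec,
    mulVec_mulVec, add_comm]

end Matrix

/-- Ellipsoidal outer bound on the consistent parameter set: with
`P := Zᵀ C_w⁻¹ Z` invertible, `c := P⁻¹ Zᵀ C_w⁻¹ r`,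
`α := rᵀ (C_w⁻¹ − C_w⁻¹ Z P⁻¹ Zᵀ C_w⁻¹) r` and `α < 1`, every `θ` with
`(r − Zθ)ᵀ C_w⁻¹ (r − Zθ) ≤ 1` satisfies
`(θ − c)ᵀ (P/(1 − α)) (θ − c) ≤ 1`. -/
theorem consistent_params_in_ellipsoid {N p : ℕ}
    (Cw : Matrix (Fin N) (Fin N) ℝ) (hCw : Cw.PosDef)
    (Z : Matrix (Fin N) (Fin p) ℝ)
    [Invertible (Zᵀ * Cw⁻¹ * Z)]
    (r : Fin N → ℝ)
    (c : Fin p → ℝ) (hc : c = ((Zᵀ * Cw⁻¹ * Z)⁻¹ * Zᵀ * Cw⁻¹).mulVec r)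
    (α : ℝ)
    (hα : α = r ⬝ᵥ ((Cw⁻¹ - Cw⁻¹ * Z * (Zᵀ * Cw⁻¹ * Z)⁻¹ * Zᵀ * Cw⁻¹).mulVec r))
    (hα1 : α < 1) :
    ∀ θ : Fin p → ℝ,
      (r - Z.mulVec θ) ⬝ᵥ (Cw⁻¹.mulVec (r - Z.mulVec θ)) ≤ 1 →
      (θ - c) ⬝ᵥ (((1 - α)⁻¹ • (Zᵀ * Cw⁻¹ * Z)).mulVec (θ - c)) ≤ 1 := by
  intro θ hθ
  have hsymm : (Cw⁻¹).IsSymm := (isHermitian_iff_isSymm.mp hCw.isHermitian).inv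
  have hsplit := hsymm.dotProduct_sub_mulVec_sub_eq_add Z r θ
  rw [weightedLeastSquares, ← hc, ← hα] at hsplit
  rw [smul_mulVec, dotProduct_smul, smul_eq_mul, inv_mul_le_one₀ (sub_pos.mpr hα1)]
  linarith
end
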